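/- arXiv:2012.02688 — 5 statements merged into one kernel-verified Lean document; each statement's English description precedes it below -/
import Mathlib

section
/- Correctness of the ESCAPED dot-product decoding (matrix form): Let F be a field, let f, n_a, n_b be natural numbers, let X and a be f × n_a matrices over F, let Y and b be f × n_b matrices over F, and let α ∈ F with α ≠ 0. Then aᵀ ⬝ (Y − b) + (X − a)ᵀ ⬝ Y + α⁻¹ • ((α • a)ᵀ ⬝ b) = Xᵀ ⬝ Y. That is, the function-party's combination A₁ + B₁ + (1/α)·B₂ of the components A₁ = aᵀ(Y − b), B₁ = (X − a)ᵀY and B₂ = α aᵀ b exactly recovers the gram matrix XᵀY. -/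
open Matrix

/-- Correctness of the ESCAPED dot-product decoding (matrix form). -/
theorem escaped_matrix_decoding_correct
    (F : Type*) [Field F] (f n_a n_b : ℕ)
    (X a : Matrix (Fin f) (Fin n_a) F) (Y b : Matrix (Fin f) (Fin n_b) F)
    (α : F) (hα : α ≠ 0) :
    aᵀ * (Y - b) + (X - a)ᵀ * Y + α⁻¹ • ((α • a)ᵀ * b) = Xᵀ * Y := by
  rw [transpose_smul, smul_mul, smul_smul, inv_mul_cancel₀ hα, one_smul]
  simp [Matrix.mul_sub, Matrix.sub_mul, transpose_sub]
end

section
/- Perfect privacy of the DARE for multiplication-addition (bijection form): Let R be a commutative ring and fix s₁, s₂, s₃ ∈ R, and set t = s₁·s₂ + s₃. The encoding map Φ : R⁴ → R⁵ given by Φ(r₁,r₂,r₃,r₄) = (s₁ − r₁, r₂·s₁ − r₁·r₂ + r₃, s₂ − r₂, r₁·s₂ + r₄, s₃ − r₃ − r₄) is injective, and its range is exactly the set {(c₁,c₂,c₃,c₄,c₅) ∈ R⁵ : c₁·c₃ + c₂ + c₄ + c₅ = t}. In particular, the set of possible encodings depends on (s₁,s₂,s₃) only through the output value t. -/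
/-- Perfect privacy of the DARE for multiplication-addition (bijection form):
the encoding map is injective and its range is exactly the set of tuples
decoding to `t = s₁ * s₂ + s₃`. -/
theorem dare_mul_add_perfect_privacy_bijection
    (R : Type*) [CommRing R] (s₁ s₂ s₃ : R) (t : R) (ht : t = s₁ * s₂ + s₃) :
    Function.Injective
      (fun r : R × R × R × R =>
        ((s₁ - r.1, r.2.1 * s₁ - r.1 * r.2.1 + r.2.2.1, s₂ - r.2.1,
          r.1 * s₂ + r.2.2.2, s₃ - r.2.2.1 - r.2.2.2) : R × R × R × R × R)) ∧
    Set.range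
      (fun r : R × R × R × R =>
        ((s₁ - r.1, r.2.1 * s₁ - r.1 * r.2.1 + r.2.2.1, s₂ - r.2.1,
          r.1 * s₂ + r.2.2.2, s₃ - r.2.2.1 - r.2.2.2) : R × R × R × R × R)) =
      {c : R × R × R × R × R |
        c.1 * c.2.2.1 + c.2.1 + c.2.2.2.1 + c.2.2.2.2 = t} := by
  constructor
  · rintro ⟨a1, a2, a3, a4⟩ ⟨b1, b2, b3, b4⟩ h
    simp only [Prod.mk.injEq] at h
    obtain ⟨h1, h2, h3, h4, h5⟩ := h
    have e1 : a1 = b1 := by linear_combination -h1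
    have e2 : a2 = b2 := by linear_combination -h3
    subst e1; subst e2
    have e3 : a3 = b3 := by linear_combination h2
    have e4 : a4 = b4 := by linear_combination h4
    simp [e3, e4]
  · ext ⟨c1, c2, c3, c4, c5⟩
    simp only [Set.mem_range, Set.mem_setOf_eq, Prod.mk.injEq]
    constructor
    · rintro ⟨⟨r1, r2, r3, r4⟩, rfl, rfl, rfl, rfl, rfl⟩
      subst ht; ring
    · intro h
      refine ⟨⟨s₁ - c1, s₂ - c3, c2 - (s₂ - c3) * s₁ + (s₁ - c1) * (s₂ - c3),
        c4 - (s₁ - c1) * s₂⟩, by ring, by ring, by ring, by ring, ?_⟩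
      linear_combination -h - ht
end

section
/- Perfect privacy of the DARE for multiplication-addition (distributional form): Let R be a nonempty finite commutative ring and fix s₁, s₂, s₃ ∈ R with t = s₁·s₂ + s₃. Then pushing forward the uniform distribution on R⁴ under the encoding map (r₁,r₂,r₃,r₄) ↦ (s₁ − r₁, r₂·s₁ − r₁·r₂ + r₃, s₂ − r₂, r₁·s₂ + r₄, s₃ − r₃ − r₄) yields the same probability mass function on R⁵ as pushing forward the uniform distribution on R⁴ under the simulator map (c₁,c₂,c₃,c₄) ↦ (c₁, c₂, c₃, c₄, −c₁·c₃ + t − c₂ − c₄). -/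
lemma pmf_map_equiv_uniform {α : Type*} [Fintype α] [Nonempty α] (e : α ≃ α) :
    PMF.map e (PMF.uniformOfFintype α) = PMF.uniformOfFintype α := by
  ext a
  rw [PMF.map_apply, PMF.uniformOfFintype_apply]
  rw [tsum_eq_single (e.symm a) (by
    intro b hb
    simp only [PMF.uniformOfFintype_apply]
    rw [if_neg]
    intro h
    exact hb (by rw [h, Equiv.symm_apply_apply]))]
  simp

/-- Perfect privacy of the DARE for multiplication-addition (distributional form):
the encoding of `(s₁, s₂, s₃)` under uniform randomness has the same distribution
as the simulator's output given only `t = s₁ * s₂ + s₃`. -/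
theorem dare_mul_add_perfect_privacy_pmf
    (R : Type*) [CommRing R] [Fintype R] [Nonempty R]
    (s₁ s₂ s₃ : R) (t : R) (ht : t = s₁ * s₂ + s₃) :
    PMF.map
      (fun r : R × R × R × R =>
        ((s₁ - r.1, r.2.1 * s₁ - r.1 * r.2.1 + r.2.2.1, s₂ - r.2.1,
          r.1 * s₂ + r.2.2.2, s₃ - r.2.2.1 - r.2.2.2) : R × R × R × R × R))
      (PMF.uniformOfFintype (R × R × R × R)) =
    PMF.map
      (fun c : R × R × R × R =>
        ((c.1, c.2.1, c.2.2.1, c.2.2.2,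
          -(c.1 * c.2.2.1) + t - c.2.1 - c.2.2.2) : R × R × R × R × R))
      (PMF.uniformOfFintype (R × R × R × R)) := by
  subst ht
  let e : (R × R × R × R) ≃ (R × R × R × R) :=
    { toFun := fun r => (s₁ - r.1, r.2.1 * s₁ - r.1 * r.2.1 + r.2.2.1,
        s₂ - r.2.1, r.1 * s₂ + r.2.2.2)
      invFun := fun c => (s₁ - c.1, s₂ - c.2.2.1,
        c.2.1 - (s₂ - c.2.2.1) * s₁ + (s₁ - c.1) * (s₂ - c.2.2.1),
        c.2.2.2 - (s₁ - c.1) * s₂)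
      left_inv := by intro r; obtain ⟨a, b, c, d⟩ := r; ext <;> simp <;> ring
      right_inv := by intro c; obtain ⟨a, b, c, d⟩ := c; ext <;> simp <;> ring }
  have key : (fun r : R × R × R × R =>
        ((s₁ - r.1, r.2.1 * s₁ - r.1 * r.2.1 + r.2.2.1, s₂ - r.2.1,
          r.1 * s₂ + r.2.2.2, s₃ - r.2.2.1 - r.2.2.2) : R × R × R × R × R)) =
      (fun c : R × R × R × R =>
        ((c.1, c.2.1, c.2.2.1, c.2.2.2,
          -(c.1 * c.2.2.1) + (s₁ * s₂ + s₃) - c.2.1 - c.2.2.2) : R × R × R × R × R)) ∘ e := by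
    funext r
    obtain ⟨a, b, c, d⟩ := r
    simp only [Function.comp, e, Equiv.coe_fn_mk]
    ext <;> simp <;> ring
  rw [key, ← PMF.map_comp, pmf_map_equiv_uniform]
end

section
/- Perfect privacy of the DARE for addition (distributional form): Let R be a nonempty finite additive commutative group and fix s₁, s₂ ∈ R with t = s₁ + s₂. Then pushing forward the uniform distribution on R under the encoding map r ↦ (s₁ + r, s₂ − r) yields the same probability mass function on R × R as pushing forward the uniform distribution on R under the simulator map c ↦ (c, t − c). -/
lemma uniform_map_equiv (R : Type*) [Fintype R] [Nonempty R] (e : R ≃ R) :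
    PMF.map e (PMF.uniformOfFintype R) = PMF.uniformOfFintype R := by
  ext x
  rw [PMF.map_apply]
  simp only [PMF.uniformOfFintype_apply]
  rw [tsum_eq_single (e.symm x) (by intro b hb; rw [if_neg (fun h => hb (by simp [h]))])]
  simp

/-- Perfect privacy of the DARE for addition (distributional form). -/
theorem dare_add_perfect_privacy_pmf
    (R : Type*) [AddCommGroup R] [Fintype R] [Nonempty R]
    (s₁ s₂ : R) (t : R) (ht : t = s₁ + s₂) :
    PMF.map (fun r : R => ((s₁ + r, s₂ - r) : R × R)) (PMF.uniformOfFintype R) =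
    PMF.map (fun c : R => ((c, t - c) : R × R)) (PMF.uniformOfFintype R) := by
  have h : (fun r : R => ((s₁ + r, s₂ - r) : R × R)) =
      (fun c : R => ((c, t - c) : R × R)) ∘ (Equiv.addLeft s₁) := by
    funext r
    simp only [Function.comp, Equiv.coe_addLeft, ht]
    congr 1
    abel
  rw [h, ← PMF.map_comp, uniform_map_equiv R (Equiv.addLeft s₁)]
end

section
/- End-to-end correctness of ESCAPED for the RBF kernel: Let f, n_a, n_b be natural numbers, X, a real f × n_a matrices, Y, b real f × n_b matrices, α ∈ ℝ with α ≠ 0, and σ ∈ ℝ with σ ≠ 0. Let D = aᵀ⬝(Y − b) + (X − a)ᵀ⬝Y + α⁻¹ • ((α • a)ᵀ ⬝ b) denote the matrix decoded by the function-party. Then for every i ∈ Fin n_a and j ∈ Fin n_b, Real.exp(−((Xᵀ⬝X) i i − 2·(D i j) + (Yᵀ⬝Y) j j) / (2·σ²)) = Real.exp(−‖xᵢ − yⱼ‖² / (2·σ²)), where xᵢ is the i-th column of X, yⱼ is the j-th column of Y, and ‖·‖² denotes the squared Euclidean norm ∑ k, (xᵢ k − yⱼ k)². That is, the RBF kernel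 values computed by the function-party from the decoded gram matrix entries coincide exactly with the RBF kernel values on the plaintext data. -/
open Matrix

/-- End-to-end correctness of ESCAPED for the RBF kernel: the RBF kernel values
computed from the decoded gram matrix entries coincide with the RBF kernel
values on the plaintext data. -/
theorem escaped_rbf_kernel_correct
    (f n_a n_b : ℕ)
    (X a : Matrix (Fin f) (Fin n_a) ℝ) (Y b : Matrix (Fin f) (Fin n_b) ℝ)
    (α : ℝ) (hα : α ≠ 0) (σ : ℝ) (hσ : σ ≠ 0)
    (D : Matrix (Fin n_a) (Fin n_b) ℝ)
    (hD : D = aᵀ * (Y - b) + (X - a)ᵀ * Y + α⁻¹ • ((α • a)ᵀ * b)) :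
    ∀ (i : Fin n_a) (j : Fin n_b),
      Real.exp (-(((Xᵀ * X) i i - 2 * D i j + (Yᵀ * Y) j j) / (2 * σ ^ 2))) =
      Real.exp (-((∑ k, (X k i - Y k j) ^ 2) / (2 * σ ^ 2))) := by
  intro i j
  have hD2 : D = Xᵀ * Y := by
    rw [hD, transpose_smul, smul_mul, smul_smul, inv_mul_cancel₀ hα, one_smul,
      transpose_sub, Matrix.mul_sub, Matrix.sub_mul]
    abel
  subst hD2
  simp only [Matrix.mul_apply, Matrix.transpose_apply]
  congr 2
  rw [Finset.mul_sum, ← Finset.sum_sub_distrib, ← Finset.sum_add_distrib]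
  congr 1
  exact Finset.sum_congr rfl fun k _ => by ring
end
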